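/- For every R ∈ ℝ³ and every q with 0 < q < 2, the function y ↦ |y − R|^{−q} (defined arbitrarily at y = R) satisfies the Kato condition on ℝ³. -/

import Mathlib

/-!
Split the heat integral at the scale `ρ = √s`. Near the singularity the kernel is at most
`(4πs)^(-n/2)`, while `∫_{B(c, ρ)} ‖y - c‖^(-q) dy` is a multiple of `ρ^(n-q)` (polar coordinates,
`q < n`); away from it `‖y - c‖^(-q) ≤ ρ^(-q)` and the kernel has mass one. Both pieces are
`O(s^(-q/2))` uniformly in `x`, and `s^(-q/2)` is integrable at `0` because `q < 2`, so the
time integral over `(0, t]` is `O(t^(1 - q/2)) → 0`. The value of `v` at the single point `R`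
does not matter, points being Lebesgue-null.
-/

open MeasureTheory

/-- A Borel function `v : ℝ^N → ℝ` (with `N = card ι`) satisfies the Kato condition if
`lim_{t → 0⁺} sup_x ∫₀ᵗ ∫ (4πs)^{-N/2} exp(-|x-y|²/(4s)) |v(y)| dy ds = 0`,
where `(4πs)^{-N/2} exp(-|x-y|²/(4s))` is the heat kernel of `e^{sΔ}` on `ℝ^N`. -/
def IsKato {ι : Type*} [Fintype ι] (v : EuclideanSpace ℝ ι → ℝ) : Prop :=
  Filter.Tendsto
    (fun t : ℝ => ⨆ x : EuclideanSpace ℝ ι,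
      ∫⁻ s in Set.Ioc (0 : ℝ) t, ∫⁻ y,
        ENNReal.ofReal ((4 * Real.pi * s) ^ (-(Fintype.card ι : ℝ) / 2) *
          Real.exp (-‖x - y‖ ^ 2 / (4 * s)) * |v y|))
    (nhdsWithin 0 (Set.Ioi 0)) (nhds 0)

open Set Real Filter Metric Module Topology
open scoped ENNReal

noncomputable def heatKernel (ι : Type*) [Fintype ι] (s : ℝ) (z : EuclideanSpace ℝ ι) : ℝ :=
  (4 * π * s) ^ (-(Fintype.card ι : ℝ) / 2) * exp (-‖z‖ ^ 2 / (4 * s))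

section HeatKernel

variable {ι : Type*} [Fintype ι] {s : ℝ}

lemma heatKernel_nonneg (hs : 0 ≤ s) (z : EuclideanSpace ℝ ι) : 0 ≤ heatKernel ι s z := by
  unfold heatKernel
  positivity

lemma heatKernel_le (hs : 0 ≤ s) (z : EuclideanSpace ℝ ι) :
    heatKernel ι s z ≤ (4 * π * s) ^ (-(Fintype.card ι : ℝ) / 2) := by
  refine mul_le_of_le_one_right (by positivity) (exp_le_one_iff.2 ?_)
  exact div_nonpos_of_nonpos_of_nonneg (neg_nonpos.2 (sq_nonneg _)) (by positivity)

lemma integral_heatKernel (hs : 0 < s) : ∫ z, heatKernel ι s z = 1 := by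
  have hgauss : ∫ z : EuclideanSpace ℝ ι, exp (-(4 * s)⁻¹ * ‖z‖ ^ 2) =
      (4 * π * s) ^ ((Fintype.card ι : ℝ) / 2) := by
    rw [GaussianFourier.integral_rexp_neg_mul_sq_norm (by positivity), finrank_euclideanSpace,
      div_inv_eq_mul, mul_comm π, mul_right_comm]
  have hkernel : heatKernel ι s = fun z =>
      ((4 * π * s) ^ ((Fintype.card ι : ℝ) / 2))⁻¹ * exp (-(4 * s)⁻¹ * ‖z‖ ^ 2) := by
    ext z
    rw [heatKernel, neg_div, rpow_neg (by positivity)]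
    congr 2
    ring
  rw [hkernel, integral_const_mul, hgauss, inv_mul_cancel₀ (by positivity)]

lemma lintegral_heatKernel_sub (hs : 0 < s) (x : EuclideanSpace ℝ ι) :
    ∫⁻ y, ENNReal.ofReal (heatKernel ι s (x - y)) = 1 := by
  have hint : Integrable (heatKernel ι s) :=
    .of_integral_ne_zero (by simp [integral_heatKernel hs])
  rw [lintegral_sub_left_eq_self (fun z => ENNReal.ofReal (heatKernel ι s z)) x,
    ← ofReal_integral_eq_lintegral_ofReal hint (.of_forall (heatKernel_nonneg hs.le)),
    integral_heatKernel hs, ENNReal.ofReal_one]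

end HeatKernel

lemma integral_Ioc_zero_rpow {a t : ℝ} (ha : -1 < a) (ht : 0 ≤ t) :
    ∫ s in Ioc 0 t, s ^ a = t ^ (a + 1) / (a + 1) := by
  rw [← intervalIntegral.integral_of_le ht, integral_rpow (Or.inl ha),
    zero_rpow (by linarith), sub_zero]

section Polar

variable {E : Type*} [NormedAddCommGroup E] [NormedSpace ℝ E] [FiniteDimensional ℝ E]
  [MeasurableSpace E] [BorelSpace E] [Nontrivial E] (μ : Measure E) [μ.IsAddHaarMeasure]

lemma lintegral_closedBall_norm_sub_rpow_neg {q ρ : ℝ} (hq : q < finrank ℝ E) (hρ : 0 ≤ ρ)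
    (c : E) :
    ∫⁻ y in closedBall c ρ, ENNReal.ofReal (‖y - c‖ ^ (-q)) ∂μ =
      ENNReal.ofReal (finrank ℝ E / (finrank ℝ E - q) * μ.real (ball 0 1) *
        ρ ^ (finrank ℝ E - q)) := by
  set n := finrank ℝ E
  set f : ℝ → ℝ := (Iic ρ).indicator fun t => t ^ (-q)
  have hexp : -1 < (n : ℝ) - 1 - q := by linarith
  have hradial : EqOn (fun t => t ^ (n - 1) • f t)
      ((Ioc 0 ρ).indicator fun t => t ^ ((n : ℝ) - 1 - q)) (Ioi 0) := by
    intro t (ht : 0 < t)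
    by_cases htρ : t ≤ ρ
    · have hn : 1 ≤ n := finrank_pos
      simp only [f, smul_eq_mul, indicator_of_mem (mem_Iic.2 htρ),
        indicator_of_mem (show t ∈ Ioc 0 ρ from ⟨ht, htρ⟩), ← rpow_natCast, ← rpow_add ht]
      push_cast [hn]
      ring_nf
    · simp [f, htρ]
  have hint : Integrable (fun z => f ‖z‖) μ := by
    rw [integrable_fun_norm_addHaar μ, integrableOn_congr_fun hradial measurableSet_Ioi]
    exact ((intervalIntegral.intervalIntegrable_rpow' hexp).1.integrable_indicator
      measurableSet_Ioc).integrableOn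
  have hf_nonneg : ∀ z : E, 0 ≤ f ‖z‖ := fun z =>
    indicator_nonneg (fun t _ => rpow_nonneg (norm_nonneg z) _) _
  calc ∫⁻ y in closedBall c ρ, ENNReal.ofReal (‖y - c‖ ^ (-q)) ∂μ
      = ∫⁻ y, ENNReal.ofReal (f ‖y - c‖) ∂μ := by
        rw [← lintegral_indicator measurableSet_closedBall]
        congr with y
        by_cases hy : ‖y - c‖ ≤ ρ <;> simp [f, indicator, dist_eq_norm, hy]
    _ = ∫⁻ z, ENNReal.ofReal (f ‖z‖) ∂μ :=
        lintegral_sub_right_eq_self (fun z => ENNReal.ofReal (f ‖z‖)) c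
    _ = ENNReal.ofReal (∫ z, f ‖z‖ ∂μ) :=
        (ofReal_integral_eq_lintegral_ofReal hint (.of_forall hf_nonneg)).symm
    _ = _ := by
        rw [integral_fun_norm_addHaar, setIntegral_congr_fun measurableSet_Ioi hradial,
          integral_indicator measurableSet_Ioc, Measure.restrict_restrict measurableSet_Ioc,
          inter_eq_left.2 Ioc_subset_Ioi_self, integral_Ioc_zero_rpow hexp hρ,
          show (n : ℝ) - 1 - q + 1 = n - q by ring]
        congr 1
        simp only [nsmul_eq_mul, smul_eq_mul]
        ring

end Polar

section Kato

variable {ι : Type*} [Fintype ι]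

lemma lintegral_heatKernel_mul_norm_sub_rpow_neg_le {q s ρ : ℝ} (hq : 0 ≤ q) (hs : 0 < s)
    (hρ : 0 < ρ) (x c : EuclideanSpace ℝ ι) :
    ∫⁻ y, ENNReal.ofReal (heatKernel ι s (x - y) * ‖y - c‖ ^ (-q)) ≤
      ENNReal.ofReal ((4 * π * s) ^ (-(Fintype.card ι : ℝ) / 2)) *
        (∫⁻ y in closedBall c ρ, ENNReal.ofReal (‖y - c‖ ^ (-q))) + ENNReal.ofReal (ρ ^ (-q)) := by
  calc ∫⁻ y, ENNReal.ofReal (heatKernel ι s (x - y) * ‖y - c‖ ^ (-q))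
      ≤ ∫⁻ y, ENNReal.ofReal ((4 * π * s) ^ (-(Fintype.card ι : ℝ) / 2)) *
            (closedBall c ρ).indicator (fun y => ENNReal.ofReal (‖y - c‖ ^ (-q))) y +
          ENNReal.ofReal (ρ ^ (-q)) * ENNReal.ofReal (heatKernel ι s (x - y)) := by
        refine lintegral_mono fun y => ?_
        have hk := heatKernel_nonneg hs.le (x - y)
        by_cases hy : y ∈ closedBall c ρ
        · rw [indicator_of_mem hy, ← ENNReal.ofReal_mul (by positivity)]
          refine le_add_right (ENNReal.ofReal_le_ofReal ?_)
          gcongr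
          exact heatKernel_le hs.le _
        · have hfar : ρ ≤ ‖y - c‖ := by
            simpa [dist_eq_norm] using (not_le.1 hy).le
          rw [indicator_of_notMem hy, mul_zero, zero_add, ← ENNReal.ofReal_mul (by positivity),
            mul_comm (ρ ^ _)]
          exact ENNReal.ofReal_le_ofReal
            (mul_le_mul_of_nonneg_left (rpow_le_rpow_of_nonpos hρ hfar (neg_nonpos.2 hq)) hk)
    _ = _ := by
        rw [lintegral_add_right _ (by unfold heatKernel; fun_prop),
          lintegral_const_mul' _ _ ENNReal.ofReal_ne_top,
          lintegral_indicator measurableSet_closedBall,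
          lintegral_const_mul' _ _ ENNReal.ofReal_ne_top, lintegral_heatKernel_sub hs, mul_one]

lemma lintegral_heatKernel_mul_norm_sub_rpow_neg_le_rpow {q s : ℝ} (hq0 : 0 < q)
    (hqn : q < Fintype.card ι) (hs : 0 < s) (x c : EuclideanSpace ℝ ι) :
    ∫⁻ y, ENNReal.ofReal (heatKernel ι s (x - y) * ‖y - c‖ ^ (-q)) ≤
      ENNReal.ofReal ((4 * π) ^ (-(Fintype.card ι : ℝ) / 2) * (Fintype.card ι /
        (Fintype.card ι - q) * volume.real (ball (0 : EuclideanSpace ℝ ι) 1)) + 1) *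
      ENNReal.ofReal (s ^ (-q / 2)) := by
  have : Nonempty ι := Fintype.card_pos_iff.1 (by exact_mod_cast hq0.trans hqn)
  have hρ : 0 < √s := sqrt_pos.2 hs
  refine (lintegral_heatKernel_mul_norm_sub_rpow_neg_le hq0.le hs hρ x c).trans_eq ?_
  rw [lintegral_closedBall_norm_sub_rpow_neg volume (by simpa using hqn) hρ.le,
    finrank_euclideanSpace, ← ENNReal.ofReal_mul (by positivity),
    ← ENNReal.ofReal_add (by positivity) (by positivity), ← ENNReal.ofReal_mul (by positivity)]
  congr 1
  set n : ℝ := (Fintype.card ι : ℝ)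
  have hscale : s ^ (-n / 2) * s ^ ((n - q) / 2) = s ^ (-q / 2) := by
    rw [← rpow_add hs]
    ring_nf
  rw [sqrt_eq_rpow, ← rpow_mul hs.le, ← rpow_mul hs.le, mul_rpow (by positivity) hs.le,
    show 1 / 2 * (n - q) = (n - q) / 2 by ring, show 1 / 2 * -q = -q / 2 by ring]
  linear_combination
    (4 * π) ^ (-n / 2) * (n / (n - q) * volume.real (ball (0 : EuclideanSpace ℝ ι) 1)) * hscale

lemma isKato_iff {v : EuclideanSpace ℝ ι → ℝ} :
    IsKato v ↔ Tendsto (fun t : ℝ => ⨆ x, ∫⁻ s in Ioc 0 t, ∫⁻ y,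
      ENNReal.ofReal (heatKernel ι s (x - y) * |v y|)) (𝓝[>] 0) (𝓝 0) :=
  Iff.rfl

lemma IsKato.congr_ae {v w : EuclideanSpace ℝ ι → ℝ} (hv : IsKato v) (h : v =ᵐ[volume] w) :
    IsKato w := by
  have heq : ∀ s x, ∫⁻ y, ENNReal.ofReal (heatKernel ι s (x - y) * |v y|) =
      ∫⁻ y, ENNReal.ofReal (heatKernel ι s (x - y) * |w y|) := fun s x =>
    lintegral_congr_ae (h.mono fun y hy => by simp only [hy])
  rw [isKato_iff] at hv ⊢
  simpa only [heq] using hv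

lemma isKato_of_lintegral_heatKernel_le {v : EuclideanSpace ℝ ι → ℝ} {C : ℝ≥0∞} {a : ℝ}
    (hC : C ≠ ∞) (ha : -1 < a)
    (hv : ∀ s, 0 < s → ∀ x, ∫⁻ y, ENNReal.ofReal (heatKernel ι s (x - y) * |v y|) ≤
      C * ENNReal.ofReal (s ^ a)) :
    IsKato v := by
  have hbound : ∀ t, 0 < t → ⨆ x, ∫⁻ s in Ioc 0 t, ∫⁻ y,
      ENNReal.ofReal (heatKernel ι s (x - y) * |v y|) ≤
      C * ENNReal.ofReal (t ^ (a + 1) / (a + 1)) := fun t ht => iSup_le fun x =>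
    calc _ ≤ ∫⁻ s in Ioc 0 t, C * ENNReal.ofReal (s ^ a) :=
          setLIntegral_mono' measurableSet_Ioc fun s hs => hv s hs.1 x
      _ = _ := by
        rw [lintegral_const_mul' _ _ hC, ← ofReal_integral_eq_lintegral_ofReal
          (intervalIntegral.intervalIntegrable_rpow' ha).1
          (ae_restrict_of_forall_mem measurableSet_Ioc fun s hs => rpow_nonneg hs.1.le _),
          integral_Ioc_zero_rpow ha ht.le]
  have hlim :
      Tendsto (fun t : ℝ => C * ENNReal.ofReal (t ^ (a + 1) / (a + 1))) (𝓝[>] 0) (𝓝 0) := by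
    have hcont : ContinuousAt (fun t : ℝ => t ^ (a + 1) / (a + 1)) 0 :=
      (continuousAt_rpow_const _ _ (Or.inr (by linarith))).div_const _
    have h0 := ENNReal.Tendsto.const_mul (ENNReal.tendsto_ofReal hcont.tendsto) (Or.inr hC)
    simpa [zero_rpow (by linarith : a + 1 ≠ 0)] using h0.mono_left nhdsWithin_le_nhds
  exact tendsto_of_tendsto_of_tendsto_of_le_of_le' tendsto_const_nhds hlim
    (.of_forall fun _ => zero_le) (eventually_nhdsWithin_of_forall hbound)

theorem isKato_norm_sub_rpow_neg {q : ℝ} (hq0 : 0 < q) (hq2 : q < 2)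
    (hqn : q < Fintype.card ι) (c : EuclideanSpace ℝ ι) :
    IsKato fun y => ‖y - c‖ ^ (-q) := by
  apply isKato_of_lintegral_heatKernel_le ENNReal.ofReal_ne_top (show -1 < -q / 2 by linarith)
  intro s hs x
  simp only [abs_of_nonneg (rpow_nonneg (norm_nonneg _) _)]
  exact lintegral_heatKernel_mul_norm_sub_rpow_neg_le_rpow hq0 hqn hs x c

end Kato

/-- For every `R ∈ ℝ³` and `0 < q < 2`, the function `y ↦ ‖y - R‖^{-q}` (defined
arbitrarily at `y = R`) satisfies the Kato condition on `ℝ³`. -/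
theorem isKato_inverse_norm_rpow (R : EuclideanSpace ℝ (Fin 3)) (q : ℝ)
    (hq0 : 0 < q) (hq2 : q < 2) (v : EuclideanSpace ℝ (Fin 3) → ℝ)
    (hv : ∀ y : EuclideanSpace ℝ (Fin 3), y ≠ R → v y = ‖y - R‖ ^ (-q)) :
    IsKato v :=
  (isKato_norm_sub_rpow_neg hq0 hq2 (by simp; linarith) R).congr_ae
    ((Measure.ae_ne volume R).mono fun y hy => (hv y hy).symm)
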